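/- arXiv:0904.1361 — 3 statements merged into one kernel-verified Lean document; each statement's English description precedes it below -/
import Mathlib

section
/- Fix λ > 0, V > 0, α₀ > 0, β₀ > 0, ξ > 0, an integer M ≥ 1 and expert opinions θ₁,…,θ_M > 0, and set φ = ξ·Σ_{m=1}^M θ_m. Let (N_k)_{k≥1} be a sequence of i.i.d. random variables on a probability space, each with the Poisson distribution of mean Vλ. For K ≥ 1 put ν_K = α₀ − 1 − Mξ + Σ_{k=1}^K N_k and ω_K = VK + 1/β₀. Then almost surely, the posterior mean √(φ/ω_K) · R_{ν_K+1}(2√(ω_K φ)) converges to λ as K → ∞. -/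
open MeasureTheory ProbabilityTheory Filter

/-- Modified Bessel function of the third kind:
`K_ν(z) = (1/2) ∫₀^∞ u^(ν-1) exp(-z(u+1/u)/2) du`. -/
noncomputable def besselK (ν z : ℝ) : ℝ :=
  (1 / 2) * ∫ u in Set.Ioi (0 : ℝ), u ^ (ν - 1) * Real.exp (-(z * (u + 1 / u)) / 2)

/-- The ratio `R_ν(z) = K_{ν+1}(z) / K_ν(z)`. -/
noncomputable def besselR (ν z : ℝ) : ℝ := besselK (ν + 1) z / besselK ν z

/-!
Integrating by parts in the defining integral gives the recurrence
`K_{ν+1}(z) = (2ν/z) K_ν(z) + K_{ν-1}(z)`, and the symmetry `u ↦ 1/u` of the integrand shows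
`K_{-ν} = K_ν` and that `K_ν(z)` increases with `|ν|`. Hence `2ν/z ≤ R_ν(z) ≤ 2ν/z + 1` for `ν ≥ 1`,
so with `z = 2√(ωφ)` the posterior mean lies between `ν/ω` and `ν/ω + √(φ/ω)`. By the strong law
of large numbers `(∑_{k<K} N_k)/K → Vλ` almost surely, so `ν_K/ω_K → λ` while `ω_K → ∞`.
-/

open Set Real

noncomputable def besselKIntegrand (ν z u : ℝ) : ℝ := u ^ (ν - 1) * exp (-(z * (u + 1 / u)) / 2)

lemma besselK_eq_integral (ν z : ℝ) :
    besselK ν z = (1 / 2) * ∫ u in Ioi (0 : ℝ), besselKIntegrand ν z u := rfl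

lemma besselKIntegrand_pos (ν z : ℝ) {u : ℝ} (hu : 0 < u) : 0 < besselKIntegrand ν z u := by
  unfold besselKIntegrand; positivity

lemma continuousOn_besselKIntegrand (ν z : ℝ) : ContinuousOn (besselKIntegrand ν z) (Ioi 0) := by
  intro u (hu : 0 < u)
  unfold besselKIntegrand
  exact ((continuousAt_rpow_const u _ (Or.inl hu.ne')).mul
    (by fun_prop (disch := exact hu.ne'))).continuousWithinAt

lemma besselKIntegrand_eq_rpow_mul_besselKIntegrand_neg (ν z : ℝ) {u : ℝ} (hu : 0 < u) :
    besselKIntegrand ν z u = u ^ ((-1 : ℝ) - 1) * besselKIntegrand (-ν) z (u ^ (-1 : ℝ)) := by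
  rw [rpow_neg_one, besselKIntegrand, besselKIntegrand, inv_rpow hu.le, ← rpow_neg hu.le,
    ← mul_assoc, ← rpow_add hu, one_div u⁻¹, inv_inv, one_div u, add_comm u⁻¹]
  ring_nf

lemma besselKIntegrand_le_of_one_le (ν : ℝ) {z u : ℝ} (hz : 0 ≤ z) (hu : 1 ≤ u) :
    besselKIntegrand ν z u ≤ u ^ max (ν - 1) 0 * exp (-(z / 2) * u) := by
  have hu0 : 0 < u := one_pos.trans_le hu
  refine mul_le_mul (rpow_le_rpow_of_exponent_le hu (le_max_left _ _)) (exp_le_exp.2 ?_)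
    (exp_pos _).le (rpow_nonneg hu0.le _)
  have : 0 ≤ z * (1 / u) := by positivity
  linarith

lemma integrableOn_besselKIntegrand (ν : ℝ) {z : ℝ} (hz : 0 < z) :
    IntegrableOn (besselKIntegrand ν z) (Ioi 0) := by
  set g : ℝ → ℝ → ℝ := fun c u ↦ u ^ max (c - 1) 0 * exp (-(z / 2) * u)
  have hg : ∀ c, IntegrableOn (g c) (Ioi 0) := fun c ↦ by
    simpa [g] using integrableOn_rpow_mul_exp_neg_mul_rpow (p := 1)
      (neg_one_lt_zero.trans_le (le_max_right (c - 1) 0)) one_pos (half_pos hz)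
  have hg' : IntegrableOn (fun u ↦ u ^ ((-1 : ℝ) - 1) • g (-ν) (u ^ (-1 : ℝ))) (Ioi 0) :=
    (integrableOn_Ioi_comp_rpow_iff' _ (by norm_num)).2 (hg (-ν))
  -- near `0` the integrand is the reflection of the integrand of `K_{-ν}` near `∞`
  refine Integrable.mono' ((hg ν).add hg')
    ((continuousOn_besselKIntegrand ν z).aestronglyMeasurable measurableSet_Ioi) ?_
  filter_upwards [ae_restrict_mem measurableSet_Ioi] with u (hu : 0 < u)
  rw [norm_of_nonneg (besselKIntegrand_pos ν z hu).le, Pi.add_apply, smul_eq_mul]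
  rcases le_or_gt 1 u with h1 | h1
  · exact (besselKIntegrand_le_of_one_le ν hz.le h1).trans (le_add_of_nonneg_right (by positivity))
  · have hinv : 1 ≤ u ^ (-1 : ℝ) := by rw [rpow_neg_one]; exact (one_le_inv₀ hu).2 h1.le
    rw [besselKIntegrand_eq_rpow_mul_besselKIntegrand_neg ν z hu]
    exact (mul_le_mul_of_nonneg_left (besselKIntegrand_le_of_one_le (-ν) hz.le hinv)
      (by positivity)).trans (le_add_of_nonneg_left (by positivity))

lemma besselK_pos (ν : ℝ) {z : ℝ} (hz : 0 < z) : 0 < besselK ν z := by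
  rw [besselK_eq_integral]
  refine mul_pos one_half_pos ?_
  rw [setIntegral_pos_iff_support_of_nonneg_ae
    (ae_restrict_of_forall_mem measurableSet_Ioi fun u hu ↦ (besselKIntegrand_pos ν z hu).le)
    (integrableOn_besselKIntegrand ν hz)]
  have : Ioi (0 : ℝ) ⊆ Function.support (besselKIntegrand ν z) ∩ Ioi 0 :=
    fun u hu ↦ ⟨(besselKIntegrand_pos ν z hu).ne', hu⟩
  exact (measure_mono this).trans_lt' (by simp)

lemma besselK_neg (ν z : ℝ) : besselK (-ν) z = besselK ν z := by
  rw [besselK_eq_integral, besselK_eq_integral,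
    ← integral_comp_rpow_Ioi _ (by norm_num : (-1 : ℝ) ≠ 0)]
  congr 1
  refine setIntegral_congr_fun measurableSet_Ioi fun u hu ↦ ?_
  rw [abs_neg, abs_one, one_mul, smul_eq_mul,
    besselKIntegrand_eq_rpow_mul_besselKIntegrand_neg ν z hu]

lemma rpow_add_rpow_neg_le {u a b : ℝ} (hu : 0 < u) (hab : |a| ≤ |b|) :
    u ^ a + u ^ (-a) ≤ u ^ b + u ^ (-b) := by
  have hcosh : ∀ c, u ^ c + u ^ (-c) = 2 * cosh (log u * c) := fun c ↦ by
    rw [rpow_def_of_pos hu, rpow_def_of_pos hu, cosh_eq, mul_neg]; ring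
  rw [hcosh, hcosh, mul_le_mul_iff_right₀ two_pos, cosh_le_cosh, abs_mul, abs_mul]
  exact mul_le_mul_of_nonneg_left hab (abs_nonneg _)

lemma besselK_le_besselK {a b z : ℝ} (hz : 0 < z) (hab : |a| ≤ |b|) :
    besselK a z ≤ besselK b z := by
  -- averaging the formulas for `K_c` and `K_{-c}` gives an integrand monotone in `|c|`
  have hsymm : ∀ c, besselK c z =
      (1 / 4) * ∫ u in Ioi (0 : ℝ), (besselKIntegrand c z u + besselKIntegrand (-c) z u) := by
    intro c
    rw [integral_add (integrableOn_besselKIntegrand c hz) (integrableOn_besselKIntegrand (-c) hz)]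
    have := besselK_neg c z
    simp only [besselK_eq_integral] at this ⊢
    linarith
  rw [hsymm a, hsymm b]
  refine mul_le_mul_of_nonneg_left (setIntegral_mono_on
    ((integrableOn_besselKIntegrand a hz).add (integrableOn_besselKIntegrand (-a) hz))
    ((integrableOn_besselKIntegrand b hz).add (integrableOn_besselKIntegrand (-b) hz))
    measurableSet_Ioi fun u (hu : 0 < u) ↦ ?_) (by norm_num)
  have hsplit : ∀ c, besselKIntegrand c z u + besselKIntegrand (-c) z u =
      (u ^ c + u ^ (-c)) * (u ^ (-1 : ℝ) * exp (-(z * (u + 1 / u)) / 2)) := fun c ↦ by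
    simp only [besselKIntegrand, sub_eq_add_neg, rpow_add hu]; ring
  rw [hsplit, hsplit]
  exact mul_le_mul_of_nonneg_right (rpow_add_rpow_neg_le hu hab) (by positivity)

lemma hasDerivAt_rpow_mul_exp (ν z : ℝ) {u : ℝ} (hu : 0 < u) :
    HasDerivAt (fun u ↦ u ^ ν * exp (-(z * (u + 1 / u)) / 2))
      (ν * besselKIntegrand ν z u - z / 2 * besselKIntegrand (ν + 1) z u
        + z / 2 * besselKIntegrand (ν - 1) z u) u := by
  have hinv : HasDerivAt (fun u : ℝ ↦ 1 / u) (-(u ^ 2)⁻¹) u := by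
    simpa [one_div] using hasDerivAt_inv hu.ne'
  refine ((hasDerivAt_rpow_const (p := ν) (Or.inl hu.ne')).mul
    ((((hasDerivAt_id u).add hinv).const_mul z).neg.div_const 2).exp).congr_deriv ?_
  have hsq : u ^ (ν - 1 - 1) = u ^ ν * (u ^ 2)⁻¹ := by
    rw [← rpow_natCast, ← rpow_neg hu.le, ← rpow_add hu]; push_cast; ring_nf
  simp only [besselKIntegrand, add_sub_cancel_right, hsq, Pi.add_apply, Pi.neg_apply, id_eq]
  ring

lemma tendsto_rpow_mul_exp_nhdsWithin_zero {ν : ℝ} (hν : 0 < ν) {z : ℝ} (hz : 0 ≤ z) :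
    Tendsto (fun u ↦ u ^ ν * exp (-(z * (u + 1 / u)) / 2)) (nhdsWithin 0 (Ici 0)) (nhds 0) := by
  have hpow : Tendsto (fun u : ℝ ↦ u ^ ν) (nhdsWithin 0 (Ici 0)) (nhds 0) := by
    simpa [zero_rpow hν.ne'] using
      (continuousAt_rpow_const 0 ν (Or.inr hν.le)).tendsto.mono_left nhdsWithin_le_nhds
  refine squeeze_zero' (eventually_nhdsWithin_of_forall fun u (hu : 0 ≤ u) ↦ by positivity)
    (eventually_nhdsWithin_of_forall fun u (hu : 0 ≤ u) ↦ ?_) hpow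
  refine mul_le_of_le_one_right (rpow_nonneg hu _) (exp_le_one_iff.2 ?_)
  have : 0 ≤ z * (u + 1 / u) := by positivity
  linarith

lemma tendsto_rpow_mul_exp_atTop (ν : ℝ) {z : ℝ} (hz : 0 < z) :
    Tendsto (fun u ↦ u ^ ν * exp (-(z * (u + 1 / u)) / 2)) atTop (nhds 0) := by
  refine squeeze_zero' ((eventually_ge_atTop 0).mono fun u hu ↦ by positivity)
    ((eventually_gt_atTop 0).mono fun u hu ↦ ?_)
    (tendsto_rpow_mul_exp_neg_mul_atTop_nhds_zero ν (z / 2) (half_pos hz))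
  refine mul_le_mul_of_nonneg_left (exp_le_exp.2 ?_) (rpow_nonneg hu.le _)
  have : 0 ≤ z * (1 / u) := by positivity
  linarith

lemma besselK_add_one {ν z : ℝ} (hν : 0 < ν) (hz : 0 < z) :
    besselK (ν + 1) z = 2 * ν / z * besselK ν z + besselK (ν - 1) z := by
  -- `u ^ ν * exp (-z (u + 1/u) / 2)` vanishes at `0` and `∞`, so its derivative integrates to `0`
  have hint := (integrableOn_besselKIntegrand (z := z) · hz)
  have hzero := integral_Ioi_of_hasDerivAt_of_tendsto
    (by simpa [ContinuousWithinAt, zero_rpow hν.ne'] using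
      tendsto_rpow_mul_exp_nhdsWithin_zero hν hz.le)
    (fun u hu ↦ hasDerivAt_rpow_mul_exp ν z hu)
    ((((hint ν).const_mul ν).sub ((hint (ν + 1)).const_mul (z / 2))).add
      ((hint (ν - 1)).const_mul (z / 2)))
    (tendsto_rpow_mul_exp_atTop ν hz)
  rw [integral_add ?_ ((hint (ν - 1)).const_mul _), integral_sub ((hint ν).const_mul _)
    ((hint (ν + 1)).const_mul _), integral_const_mul, integral_const_mul, integral_const_mul]
    at hzero
  · simp only [besselK_eq_integral, zero_rpow hν.ne', zero_mul, sub_zero] at hzero ⊢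
    field_simp
    linarith
  · exact ((hint ν).const_mul ν).sub ((hint (ν + 1)).const_mul (z / 2))

lemma besselR_mem_Icc {ν z : ℝ} (hν : 1 ≤ ν) (hz : 0 < z) :
    besselR ν z ∈ Icc (2 * ν / z) (2 * ν / z + 1) := by
  have hK := besselK_pos ν hz
  have hratio : besselR ν z = 2 * ν / z + besselK (ν - 1) z / besselK ν z := by
    rw [besselR, besselK_add_one (by linarith) hz]
    field_simp
  have hle : besselK (ν - 1) z ≤ besselK ν z := besselK_le_besselK hz <| by
    rw [abs_of_nonneg (by linarith), abs_of_nonneg (by linarith)]; linarith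
  rw [hratio]
  exact ⟨le_add_of_nonneg_right (div_pos (besselK_pos _ hz) hK).le,
    add_le_add_right ((div_le_one hK).2 hle) _⟩

lemma sqrt_div_mul_div_sqrt_mul (ν : ℝ) {ω φ : ℝ} (hω : 0 < ω) (hφ : 0 < φ) :
    √(φ / ω) * (2 * ν / (2 * √(ω * φ))) = ν / ω := by
  have : √(φ / ω) / √(ω * φ) = 1 / ω := by
    rw [← sqrt_div (div_pos hφ hω).le, show φ / ω / (ω * φ) = (1 / ω) ^ 2 by field_simp,
      sqrt_sq (one_div_pos.2 hω).le]
  rw [mul_div_mul_left _ _ two_ne_zero, mul_div_left_comm, this, mul_one_div]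

lemma sqrt_div_mul_besselR_mem_Icc {ν ω φ : ℝ} (hν : 1 ≤ ν) (hω : 0 < ω) (hφ : 0 < φ) :
    √(φ / ω) * besselR ν (2 * √(ω * φ)) ∈ Icc (ν / ω) (ν / ω + √(φ / ω)) := by
  obtain ⟨hlow, hhigh⟩ := besselR_mem_Icc hν (by positivity : 0 < 2 * √(ω * φ))
  rw [← sqrt_div_mul_div_sqrt_mul ν hω hφ]
  refine ⟨mul_le_mul_of_nonneg_left hlow (sqrt_nonneg _), ?_⟩
  calc √(φ / ω) * besselR ν (2 * √(ω * φ))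
      ≤ √(φ / ω) * (2 * ν / (2 * √(ω * φ)) + 1) := mul_le_mul_of_nonneg_left hhigh (sqrt_nonneg _)
    _ = _ := by ring

lemma tendsto_sqrt_div_mul_besselR {ι : Type*} {l : Filter ι} {ν ω : ι → ℝ} {φ lam : ℝ}
    (hφ : 0 < φ) (hν : ∀ᶠ i in l, 1 ≤ ν i) (hω : Tendsto ω l atTop)
    (hlim : Tendsto (fun i ↦ ν i / ω i) l (nhds lam)) :
    Tendsto (fun i ↦ √(φ / ω i) * besselR (ν i) (2 * √(ω i * φ))) l (nhds lam) := by
  have hsqrt : Tendsto (fun i ↦ √(φ / ω i)) l (nhds 0) := by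
    simpa using (tendsto_const_nhds.div_atTop hω).sqrt
  have hbounds := (hν.and (hω.eventually_gt_atTop 0)).mono fun i hi ↦
    sqrt_div_mul_besselR_mem_Icc hi.1 hi.2 hφ
  exact tendsto_of_tendsto_of_tendsto_of_le_of_le' hlim (by simpa using hlim.add hsqrt)
    (hbounds.mono fun _ h ↦ h.1) (hbounds.mono fun _ h ↦ h.2)

open scoped NNReal

lemma hasSum_poissonMeasure_natCast (r : ℝ≥0) :
    HasSum (fun n : ℕ ↦ (exp (-r) * r ^ n / n.factorial) • (n : ℝ)) r := by
  refine (hasSum_nat_add_iff' 1).1 ?_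
  simpa using ((hasSum_one_poissonMeasure r).mul_left (r : ℝ)).congr_fun fun n ↦ by
    rw [Nat.factorial_succ]; push_cast; field_simp; ring

lemma integrable_natCast_poissonMeasure (r : ℝ≥0) :
    Integrable (fun n : ℕ ↦ (n : ℝ)) Po(r) :=
  integrable_poissonMeasure_iff.2 <| by
    simpa [smul_eq_mul] using (hasSum_poissonMeasure_natCast r).summable

lemma integral_natCast_poissonMeasure (r : ℝ≥0) : ∫ n, (n : ℝ) ∂Po(r) = r :=
  (hasSum_integral_poissonMeasure (integrable_natCast_poissonMeasure r)).unique
    (hasSum_poissonMeasure_natCast r)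

lemma ae_tendsto_sum_comp_div_of_map_eq {Ω α : Type*} [MeasurableSpace Ω] [MeasurableSpace α]
    {μ : Measure Ω} {X : ℕ → Ω → α} {P : Measure α} {f : α → ℝ} (hf : Measurable f)
    (hX : ∀ k, AEMeasurable (X k) μ) (hindep : Pairwise fun i j ↦ IndepFun (X i) (X j) μ)
    (hlaw : ∀ k, μ.map (X k) = P) (hint : Integrable f P) :
    ∀ᵐ x ∂μ, Tendsto (fun K : ℕ ↦ (∑ k ∈ Finset.range K, f (X k x)) / K) atTop
      (nhds (∫ a, f a ∂P)) := by
  have hident : ∀ k, IdentDistrib (f ∘ X k) (f ∘ X 0) μ μ := fun k ↦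
    (IdentDistrib.mk (hX k) (hX 0) (by rw [hlaw, hlaw])).comp hf
  have hint0 : Integrable (f ∘ X 0) μ := by
    rw [← hlaw 0] at hint; exact hint.comp_aemeasurable (hX 0)
  have hmean : ∫ x, f (X 0 x) ∂μ = ∫ a, f a ∂P := by
    rw [← hlaw 0, integral_map (hX 0) hf.aestronglyMeasurable]
  simpa [hmean] using strong_law_ae_real (fun k ↦ f ∘ X k) hint0
    (fun i j hij ↦ (hindep hij).comp hf hf) hident

lemma tendsto_atTop_of_tendsto_div_natCast {S : ℕ → ℝ} {c : ℝ} (hc : 0 < c)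
    (hS : Tendsto (fun K : ℕ ↦ S K / K) atTop (nhds c)) : Tendsto S atTop atTop :=
  (hS.pos_mul_atTop hc tendsto_natCast_atTop_atTop).congr' <|
    (eventually_ne_atTop 0).mono fun _ hK ↦ div_mul_cancel₀ _ (Nat.cast_ne_zero.2 hK)

lemma tendsto_add_div_mul_add_of_tendsto_div_natCast {S : ℕ → ℝ} {c V : ℝ} (a b : ℝ)
    (hV : V ≠ 0) (hS : Tendsto (fun K : ℕ ↦ S K / K) atTop (nhds c)) :
    Tendsto (fun K : ℕ ↦ (a + S K) / (V * K + b)) atTop (nhds (c / V)) := by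
  have hnum := (tendsto_const_div_atTop_nhds_zero_nat a).add hS
  have hden := (tendsto_const_div_atTop_nhds_zero_nat b).const_add V
  rw [zero_add] at hnum
  rw [add_zero] at hden
  refine (hnum.div hden hV).congr' <| (eventually_ne_atTop 0).mono fun K hK ↦ ?_
  have : (K : ℝ) ≠ 0 := Nat.cast_ne_zero.2 hK
  simp only [Pi.div_apply]
  field_simp

theorem posterior_mean_tendsto_of_many_observations_general
    {Ω : Type*} [MeasurableSpace Ω] (μ : Measure Ω)
    (lam V α₀ β₀ ξ : ℝ) (hlam : 0 < lam) (hV : 0 < V)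
    (hξ : 0 < ξ) (M : ℕ) (hM : 1 ≤ M) (θ : Fin M → ℝ) (hθ : ∀ m, 0 < θ m)
    (φ : ℝ) (hφ : φ = ξ * ∑ m, θ m)
    (N : ℕ → Ω → ℕ) (hmeas : ∀ k, Measurable (N k))
    (hindep : iIndepFun N μ)
    (hdist : ∀ k, μ.map (N k) = poissonMeasure (Real.toNNReal (V * lam))) :
    ∀ᵐ x ∂μ, Tendsto (fun K : ℕ =>
        Real.sqrt (φ / (V * K + 1 / β₀)) *
          besselR ((α₀ - 1 - M * ξ + ∑ k ∈ Finset.range K, (N k x : ℝ)) + 1)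
            (2 * Real.sqrt ((V * K + 1 / β₀) * φ)))
      atTop (nhds lam) := by
  have hVlam : 0 < V * lam := mul_pos hV hlam
  have hφpos : 0 < φ := hφ ▸ mul_pos hξ
    (Finset.sum_pos (fun m _ ↦ hθ m) (Finset.univ_nonempty_iff.2 ⟨⟨0, hM⟩⟩))
  filter_upwards [ae_tendsto_sum_comp_div_of_map_eq measurable_from_top
    (fun k ↦ (hmeas k).aemeasurable) (fun _ _ hij ↦ hindep.indepFun hij) hdist
    (integrable_natCast_poissonMeasure _)] with x hx
  rw [integral_natCast_poissonMeasure, Real.coe_toNNReal _ hVlam.le] at hx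
  refine tendsto_sqrt_div_mul_besselR hφpos ?_ ?_ ?_
  · refine (tendsto_atTop_add_const_right _ 1 ?_).eventually_ge_atTop 1
    exact tendsto_atTop_add_const_left _ _ (tendsto_atTop_of_tendsto_div_natCast hVlam hx)
  · exact tendsto_atTop_add_const_right _ _ (tendsto_natCast_atTop_atTop.const_mul_atTop hV)
  · have hlim := tendsto_add_div_mul_add_of_tendsto_div_natCast (α₀ - M * ξ) (1 / β₀) hV.ne' hx
    rw [mul_div_cancel_left₀ _ hV.ne'] at hlim
    exact hlim.congr fun K ↦ by ring

/-- **Theorem 2a: consistency as the number of observed years grows.**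
If the annual counts are i.i.d. Poisson(Vλ), then almost surely the posterior mean
`√(φ/ω_K) R_{ν_K+1}(2√(ω_K φ))` of the Poisson intensity converges to `λ` as `K → ∞`. -/
theorem posterior_mean_tendsto_of_many_observations
    {Ω : Type*} [MeasurableSpace Ω] (μ : Measure Ω) [IsProbabilityMeasure μ]
    (lam V α₀ β₀ ξ : ℝ) (hlam : 0 < lam) (hV : 0 < V) (hα₀ : 0 < α₀) (hβ₀ : 0 < β₀)
    (hξ : 0 < ξ) (M : ℕ) (hM : 1 ≤ M) (θ : Fin M → ℝ) (hθ : ∀ m, 0 < θ m)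
    (φ : ℝ) (hφ : φ = ξ * ∑ m, θ m)
    (N : ℕ → Ω → ℕ) (hmeas : ∀ k, Measurable (N k))
    (hindep : iIndepFun N μ)
    (hdist : ∀ k, μ.map (N k) = poissonMeasure (Real.toNNReal (V * lam))) :
    ∀ᵐ x ∂μ, Tendsto (fun K : ℕ =>
        Real.sqrt (φ / (V * K + 1 / β₀)) *
          besselR ((α₀ - 1 - M * ξ + ∑ k ∈ Finset.range K, (N k x : ℝ)) + 1)
            (2 * Real.sqrt ((V * K + 1 / β₀) * φ)))
      atTop (nhds lam) :=
  posterior_mean_tendsto_of_many_observations_general μ lam V α₀ β₀ ξ hlam hV hξ M hM θ hθ φ hφ N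
    hmeas hindep hdist
end

section
/- Fix α₀, β₀, ξ, L > 0, integers K ≥ 0 and M ≥ 1, losses x₁,…,x_K with x_k ≥ L for all k, and expert opinions θ₁,…,θ_M > 0. Set ν = α₀ − 1 − Mξ + K, ω = 1/β₀ + Σ_{k=1}^K log(x_k/L) and φ = ξ·Σ_{m=1}^M θ_m. Then there exists c > 0 such that for every γ > 0, [γ^{α₀−1} e^{−γ/β₀}/(β₀^{α₀}Γ(α₀))] · ∏_{k=1}^K (γ/L)(x_k/L)^{−(γ+1)} · ∏_{m=1}^M [θ_m^{ξ−1} e^{−θ_m ξ/γ}/((γ/ξ)^ξ Γ(ξ))] = c · γ^ν exp(−ωγ − φ/γ); that is, the posterior density of the Pareto tail index in the Pareto–Gamma–Gamma model is the generalized inverse Gaussian density GIG(ω,φ,ν). -/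
/-! Each factor of the posterior is, as a function of `γ > 0`, a positive constant times a kernel
`γ^ν exp(-ωγ - φ/γ)`: the Gamma prior with `(α₀ - 1, 1/β₀, 0)`, each Pareto loss with
`(1, log (x/L), 0)` and each expert opinion with `(-ξ, 0, ξθ)`. Such kernels multiply by adding
their parameters, so the posterior is a GIG kernel whose parameters are the sums. -/

open MeasureTheory ProbabilityTheory Filter

noncomputable def gigKernel (ν ω φ γ : ℝ) : ℝ := γ ^ ν * Real.exp (-(ω * γ) - φ / γ)

def IsProportionalToGIG (f : ℝ → ℝ) (ν ω φ : ℝ) : Prop :=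
  ∃ c : ℝ, 0 < c ∧ ∀ γ : ℝ, 0 < γ → f γ = c * gigKernel ν ω φ γ

lemma gigKernel_mul {γ : ℝ} (hγ : 0 < γ) (ν ω φ ν' ω' φ' : ℝ) :
    gigKernel ν ω φ γ * gigKernel ν' ω' φ' γ = gigKernel (ν + ν') (ω + ω') (φ + φ') γ := by
  unfold gigKernel
  rw [Real.rpow_add hγ, mul_mul_mul_comm, ← Real.exp_add]
  congr 2
  ring

namespace IsProportionalToGIG

lemma one : IsProportionalToGIG (fun _ => 1) 0 0 0 :=
  ⟨1, one_pos, fun γ _ => by simp [gigKernel]⟩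

lemma mul {f g : ℝ → ℝ} {ν ω φ ν' ω' φ' : ℝ} (hf : IsProportionalToGIG f ν ω φ)
    (hg : IsProportionalToGIG g ν' ω' φ') :
    IsProportionalToGIG (fun γ => f γ * g γ) (ν + ν') (ω + ω') (φ + φ') := by
  obtain ⟨c, hc, hfc⟩ := hf
  obtain ⟨d, hd, hgd⟩ := hg
  refine ⟨c * d, mul_pos hc hd, fun γ hγ => ?_⟩
  rw [← gigKernel_mul hγ, mul_mul_mul_comm, ← hfc γ hγ, ← hgd γ hγ]

lemma prod {ι : Type*} (s : Finset ι) {f : ι → ℝ → ℝ} {ν ω φ : ι → ℝ}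
    (hf : ∀ i ∈ s, IsProportionalToGIG (f i) (ν i) (ω i) (φ i)) :
    IsProportionalToGIG (fun γ => ∏ i ∈ s, f i γ) (∑ i ∈ s, ν i) (∑ i ∈ s, ω i)
      (∑ i ∈ s, φ i) := by
  classical
  induction s using Finset.induction_on with
  | empty => simpa using one
  | insert a s ha ih =>
    simp only [Finset.prod_insert ha, Finset.sum_insert ha]
    exact (hf a (s.mem_insert_self a)).mul (ih fun i hi => hf i (Finset.mem_insert_of_mem hi))

end IsProportionalToGIG

lemma isProportionalToGIG_gammaPDF {α β : ℝ} (hα : 0 < α) (hβ : 0 < β) :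
    IsProportionalToGIG (fun γ => γ ^ (α - 1) * Real.exp (-γ / β) / (β ^ α * Real.Gamma α))
      (α - 1) (1 / β) 0 := by
  have hnorm : 0 < β ^ α * Real.Gamma α :=
    mul_pos (Real.rpow_pos_of_pos hβ α) (Real.Gamma_pos_of_pos hα)
  refine ⟨(β ^ α * Real.Gamma α)⁻¹, inv_pos.mpr hnorm, fun γ _ => ?_⟩
  dsimp only [gigKernel]
  rw [zero_div, sub_zero]
  field_simp

lemma isProportionalToGIG_paretoPDF {L x : ℝ} (hL : 0 < L) (hx : 0 < x) :
    IsProportionalToGIG (fun γ => γ / L * (x / L) ^ (-(γ + 1))) 1 (Real.log (x / L)) 0 := by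
  have hxL : 0 < x / L := div_pos hx hL
  refine ⟨x⁻¹, inv_pos.mpr hx, fun γ _ => ?_⟩
  dsimp only [gigKernel]
  rw [Real.rpow_one, zero_div, sub_zero, neg_add, Real.rpow_add hxL, Real.rpow_neg_one,
    Real.rpow_def_of_pos hxL]
  field_simp

/-- The Gamma(`ξ`, scale `γ / ξ`) density at `θ`, as a function of `γ`. -/
lemma isProportionalToGIG_gammaPDF_scale {ξ θ : ℝ} (hξ : 0 < ξ) (hθ : 0 < θ) :
    IsProportionalToGIG
      (fun γ => θ ^ (ξ - 1) * Real.exp (-(θ * ξ) / γ) / ((γ / ξ) ^ ξ * Real.Gamma ξ))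
      (-ξ) 0 (ξ * θ) := by
  refine ⟨θ ^ (ξ - 1) * ξ ^ ξ / Real.Gamma ξ, ?_, fun γ hγ => ?_⟩
  · have := Real.Gamma_pos_of_pos hξ
    have := Real.rpow_pos_of_pos hθ (ξ - 1)
    have := Real.rpow_pos_of_pos hξ ξ
    positivity
  · have := (Real.Gamma_pos_of_pos hξ).ne'
    have := (Real.rpow_pos_of_pos hγ ξ).ne'
    dsimp only [gigKernel]
    rw [Real.div_rpow hγ.le hξ.le, Real.rpow_neg hγ.le, zero_mul, neg_zero, zero_sub]
    field_simp

theorem pareto_gamma_gamma_posterior_is_GIG_general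
    (α₀ β₀ ξ L : ℝ) (hα₀ : 0 < α₀) (hβ₀ : 0 < β₀) (hξ : 0 < ξ) (hL : 0 < L)
    (K M : ℕ) (x : Fin K → ℝ) (hx : ∀ k, L ≤ x k)
    (θ : Fin M → ℝ) (hθ : ∀ m, 0 < θ m)
    (ν ω φ : ℝ)
    (hν : ν = α₀ - 1 - M * ξ + K)
    (hω : ω = 1 / β₀ + ∑ k, Real.log (x k / L))
    (hφ : φ = ξ * ∑ m, θ m) :
    ∃ c : ℝ, 0 < c ∧ ∀ γ : ℝ, 0 < γ →
      (γ ^ (α₀ - 1) * Real.exp (-γ / β₀) / (β₀ ^ α₀ * Real.Gamma α₀)) *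
        (∏ k, γ / L * (x k / L) ^ (-(γ + 1))) *
        (∏ m, θ m ^ (ξ - 1) * Real.exp (-(θ m * ξ) / γ) / ((γ / ξ) ^ ξ * Real.Gamma ξ)) =
      c * (γ ^ ν * Real.exp (-(ω * γ) - φ / γ)) := by
  have hposterior := ((isProportionalToGIG_gammaPDF hα₀ hβ₀).mul
      (IsProportionalToGIG.prod Finset.univ fun k _ =>
        isProportionalToGIG_paretoPDF hL (hL.trans_le (hx k)))).mul
    (IsProportionalToGIG.prod Finset.univ fun m _ => isProportionalToGIG_gammaPDF_scale hξ (hθ m))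
  have hν' : α₀ - 1 + ∑ _k : Fin K, (1 : ℝ) + ∑ _m : Fin M, -ξ = ν := by
    simp only [Finset.sum_const, Finset.card_univ, Fintype.card_fin, nsmul_eq_mul, hν]
    ring
  have hω' : 1 / β₀ + ∑ k, Real.log (x k / L) + ∑ _m : Fin M, (0 : ℝ) = ω := by
    rw [Finset.sum_const_zero, add_zero, hω]
  have hφ' : 0 + ∑ _k : Fin K, (0 : ℝ) + ∑ m, ξ * θ m = φ := by
    rw [Finset.sum_const_zero, zero_add, zero_add, hφ, Finset.mul_sum]
  rw [hν', hω', hφ'] at hposterior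
  exact hposterior

/-- **Pareto–Gamma–Gamma posterior, Theorem 5.**
The product of the Gamma(α₀,β₀) prior density, the Pareto(γ,L) likelihoods of the losses
and the Gamma(ξ, γ/ξ) likelihoods of the expert opinions is, up to a positive normalizing
constant, the GIG(ω,φ,ν) density `γ^ν exp(-ωγ - φ/γ)`. -/
theorem pareto_gamma_gamma_posterior_is_GIG
    (α₀ β₀ ξ L : ℝ) (hα₀ : 0 < α₀) (hβ₀ : 0 < β₀) (hξ : 0 < ξ) (hL : 0 < L)
    (K M : ℕ) (hM : 1 ≤ M) (x : Fin K → ℝ) (hx : ∀ k, L ≤ x k)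
    (θ : Fin M → ℝ) (hθ : ∀ m, 0 < θ m)
    (ν ω φ : ℝ)
    (hν : ν = α₀ - 1 - M * ξ + K)
    (hω : ω = 1 / β₀ + ∑ k, Real.log (x k / L))
    (hφ : φ = ξ * ∑ m, θ m) :
    ∃ c : ℝ, 0 < c ∧ ∀ γ : ℝ, 0 < γ →
      (γ ^ (α₀ - 1) * Real.exp (-γ / β₀) / (β₀ ^ α₀ * Real.Gamma α₀)) *
        (∏ k, γ / L * (x k / L) ^ (-(γ + 1))) *
        (∏ m, θ m ^ (ξ - 1) * Real.exp (-(θ m * ξ) / γ) / ((γ / ξ) ^ ξ * Real.Gamma ξ)) =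
      c * (γ ^ ν * Real.exp (-(ω * γ) - φ / γ)) :=
  pareto_gamma_gamma_posterior_is_GIG_general α₀ β₀ ξ L hα₀ hβ₀ hξ hL K M x hx θ hθ ν ω φ hν hω hφ
end

section
/- Fix α₀ > 0, an integer K ≥ 0, an integer M ≥ 1, a value θ̄ > 0, and ω > 0. Then lim_{ξ→∞} √(ξMθ̄/ω) · R_{α₀ − Mξ + K}(2√(ω ξ M θ̄)) = θ̄; that is, in the Pareto–Gamma–Gamma model, as the coefficient of variation 1/√ξ of the expert opinions tends to 0, the posterior mean of the Pareto tail index converges to the experts' common opinion θ̄. -/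
/-!
With `φ = ξMθ̄` and `λ = Mξ`, the integral defining `K_ν` turns `√(φ/ω) R_ν(2√(ωφ))` into `θ̄` times
the mean of `s` under the density proportional to `s^(α₀+K-1-λ) exp(-(ωθ̄ s + λ/s))` on `(0, ∞)`.
Up to a factor independent of `s`, this density is `exp(-(λ-1)(log s + 1/s - 1))` times a fixed
integrable weight, and `log s + 1/s - 1 ≥ 0` vanishes only at `s = 1`. By Laplace's method the
density concentrates at `s = 1` as `λ → ∞`, so the mean tends to `1`.
-/

open MeasureTheory ProbabilityTheory Filter

open Set Real Topology
open scoped Nat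

section Laplace

variable {α : Type*} [MeasurableSpace α] {μ : Measure α} {w ψ F : α → ℝ}

lemma MeasureTheory.Integrable.exp_neg_mul_mul {g : α → ℝ} (hg : Integrable g μ) (hψ : Measurable ψ)
    (hψ0 : ∀ᵐ x ∂μ, 0 ≤ ψ x) {t : ℝ} (ht : 0 ≤ t) :
    Integrable (fun x => exp (-(t * ψ x)) * g x) μ :=
  hg.bdd_mul (c := 1) (hψ.const_mul t).neg.exp.aestronglyMeasurable <| by
    filter_upwards [hψ0] with x hx
    rw [norm_of_nonneg (exp_pos _).le, exp_le_one_iff, neg_nonpos]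
    positivity

variable (hw : Integrable w μ) (hψ : Measurable ψ) (hw0 : ∀ᵐ x ∂μ, 0 ≤ w x)
  (hψ0 : ∀ᵐ x ∂μ, 0 ≤ ψ x)
include hw hψ hw0 hψ0

lemma exp_neg_mul_mul_setIntegral_le_integral {t : ℝ} (ht : 0 ≤ t) (η : ℝ) :
    exp (-(t * η)) * ∫ x in {x | ψ x < η}, w x ∂μ ≤ ∫ x, exp (-(t * ψ x)) * w x ∂μ := by
  have hmeas : MeasurableSet {x | ψ x < η} := measurableSet_lt hψ measurable_const
  rw [← integral_const_mul]
  calc ∫ x in {x | ψ x < η}, exp (-(t * η)) * w x ∂μ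
      ≤ ∫ x in {x | ψ x < η}, exp (-(t * ψ x)) * w x ∂μ := by
        refine setIntegral_mono_on_ae (hw.integrableOn.const_mul _)
          (hw.exp_neg_mul_mul hψ hψ0 ht).integrableOn hmeas ?_
        filter_upwards [hw0] with x hx hxη
        gcongr
    _ ≤ ∫ x, exp (-(t * ψ x)) * w x ∂μ :=
        setIntegral_le_integral (hw.exp_neg_mul_mul hψ hψ0 ht) <| by
          filter_upwards [hw0] with x hx using by positivity

lemma abs_integral_mul_exp_neg_mul_sub_le {L ε η t : ℝ} (ht : 0 ≤ t) (hε : 0 ≤ ε)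
    (hFw : Integrable (fun x => F x * w x) μ) (hF : ∀ᵐ x ∂μ, ψ x < η → |F x - L| ≤ ε) :
    |∫ x, F x * (exp (-(t * ψ x)) * w x) ∂μ - L * ∫ x, exp (-(t * ψ x)) * w x ∂μ|
      ≤ ε * ∫ x, exp (-(t * ψ x)) * w x ∂μ + exp (-(t * η)) * ∫ x, |F x - L| * w x ∂μ := by
  have hE := hw.exp_neg_mul_mul hψ hψ0 ht
  have hFE : Integrable (fun x => F x * (exp (-(t * ψ x)) * w x)) μ := by
    simpa only [mul_left_comm] using hFw.exp_neg_mul_mul hψ hψ0 ht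
  have hGw : Integrable (fun x => |F x - L| * w x) μ := by
    refine (hFw.sub (hw.const_mul L)).abs.congr ?_
    filter_upwards [hw0] with x hx
    rw [Pi.sub_apply, ← sub_mul, abs_mul, abs_of_nonneg hx]
  have hGE : Integrable (fun x => (F x - L) * (exp (-(t * ψ x)) * w x)) μ :=
    (hFE.sub (hE.const_mul L)).congr (ae_of_all _ fun x => by simp only [Pi.sub_apply, sub_mul])
  calc _ = |∫ x, (F x - L) * (exp (-(t * ψ x)) * w x) ∂μ| := by
        rw [← integral_const_mul, ← integral_sub hFE (hE.const_mul L)]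
        simp only [sub_mul]
    _ ≤ ∫ x, |(F x - L) * (exp (-(t * ψ x)) * w x)| ∂μ := abs_integral_le_integral_abs
    _ ≤ ∫ x, (ε * (exp (-(t * ψ x)) * w x) + exp (-(t * η)) * (|F x - L| * w x)) ∂μ := by
        refine integral_mono_ae hGE.abs ?_ ?_
        · exact (hE.const_mul ε).add (hGw.const_mul _)
        filter_upwards [hw0, hF] with x hx hFx
        rw [abs_mul, abs_of_nonneg (by positivity : 0 ≤ exp (-(t * ψ x)) * w x)]
        by_cases hxη : ψ x < η
        · exact le_add_of_le_of_nonneg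
            (mul_le_mul_of_nonneg_right (hFx hxη) (by positivity)) (by positivity)
        · have hηx : η ≤ ψ x := not_lt.mp hxη
          refine le_add_of_nonneg_of_le (by positivity) ?_
          calc |F x - L| * (exp (-(t * ψ x)) * w x) ≤ |F x - L| * (exp (-(t * η)) * w x) := by
                gcongr
            _ = exp (-(t * η)) * (|F x - L| * w x) := by ring
    _ = _ := by rw [integral_add (hE.const_mul ε) (hGw.const_mul _), integral_const_mul,
        integral_const_mul]

lemma abs_integral_mul_exp_neg_mul_div_sub_le {L ε η t : ℝ} (ht : 0 ≤ t) (hε : 0 ≤ ε)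
    (hFw : Integrable (fun x => F x * w x) μ) (hF : ∀ᵐ x ∂μ, ψ x < η → |F x - L| ≤ ε)
    (hmass : 0 < ∫ x in {x | ψ x < η / 2}, w x ∂μ) :
    |(∫ x, F x * (exp (-(t * ψ x)) * w x) ∂μ) / (∫ x, exp (-(t * ψ x)) * w x ∂μ) - L|
      ≤ ε + (∫ x, |F x - L| * w x ∂μ) / (∫ x in {x | ψ x < η / 2}, w x ∂μ)
          * exp (-(t * (η / 2))) := by
  set D := ∫ x, exp (-(t * ψ x)) * w x ∂μ
  set c := ∫ x in {x | ψ x < η / 2}, w x ∂μ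
  set C := ∫ x, |F x - L| * w x ∂μ
  have hD : exp (-(t * (η / 2))) * c ≤ D :=
    exp_neg_mul_mul_setIntegral_le_integral hw hψ hw0 hψ0 ht _
  have hDpos : 0 < D := lt_of_lt_of_le (by positivity) hD
  have hC : 0 ≤ C := integral_nonneg_of_ae <| by
    filter_upwards [hw0] with x hx using by positivity
  rw [div_sub' hDpos.ne', abs_div, abs_of_pos hDpos, div_le_iff₀ hDpos, mul_comm D]
  calc _ ≤ ε * D + exp (-(t * η)) * C :=
        abs_integral_mul_exp_neg_mul_sub_le hw hψ hw0 hψ0 ht hε hFw hF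
    _ = ε * D + C / c * exp (-(t * (η / 2))) * (exp (-(t * (η / 2))) * c) := by
        have : exp (-(t * η)) = exp (-(t * (η / 2))) * exp (-(t * (η / 2))) := by
          rw [← exp_add]; ring_nf
        rw [this]; field_simp
    _ ≤ (ε + C / c * exp (-(t * (η / 2)))) * D := by
        rw [add_mul]; gcongr

theorem tendsto_integral_mul_exp_neg_mul_div {L : ℝ} (hFw : Integrable (fun x => F x * w x) μ)
    (hF : ∀ ε > 0, ∃ η > 0, ∀ᵐ x ∂μ, ψ x < η → |F x - L| ≤ ε)
    (hmass : ∀ η > 0, 0 < ∫ x in {x | ψ x < η}, w x ∂μ) :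
    Tendsto (fun t => (∫ x, F x * (exp (-(t * ψ x)) * w x) ∂μ) /
      ∫ x, exp (-(t * ψ x)) * w x ∂μ) atTop (𝓝 L) := by
  rw [Metric.tendsto_nhds]
  intro ε hε
  obtain ⟨η, hη, hFη⟩ := hF (ε / 2) (half_pos hε)
  have htail : Tendsto (fun t => (∫ x, |F x - L| * w x ∂μ) /
      (∫ x in {x | ψ x < η / 2}, w x ∂μ) * exp (-(t * (η / 2)))) atTop (𝓝 0) := by
    simpa using (tendsto_exp_neg_atTop_nhds_zero.comp
      (tendsto_id.atTop_mul_const (half_pos hη))).const_mul _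
  filter_upwards [eventually_ge_atTop 0, htail.eventually (gt_mem_nhds (half_pos hε))]
    with t ht htail
  rw [Real.dist_eq]
  exact (abs_integral_mul_exp_neg_mul_div_sub_le hw hψ hw0 hψ0 ht (half_pos hε).le hFw hFη
    (hmass _ (half_pos hη))).trans_lt (by linarith)

end Laplace

noncomputable def logAddInvSubOne (s : ℝ) : ℝ := log s + s⁻¹ - 1

section logAddInvSubOne

variable {s t : ℝ}

lemma measurable_logAddInvSubOne : Measurable logAddInvSubOne := by
  unfold logAddInvSubOne; fun_prop

lemma continuousOn_logAddInvSubOne : ContinuousOn logAddInvSubOne (Ioi 0) := by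
  unfold logAddInvSubOne
  exact ((continuousOn_log.mono fun x hx => ne_of_gt hx).add
    (continuousOn_inv₀.mono fun x hx => ne_of_gt hx)).sub continuousOn_const

lemma logAddInvSubOne_nonneg (hs : 0 < s) : 0 ≤ logAddInvSubOne s := by
  have := one_sub_inv_le_log_of_pos hs
  unfold logAddInvSubOne; linarith

lemma logAddInvSubOne_pos (hs : 0 < s) (h1 : s ≠ 1) : 0 < logAddInvSubOne s := by
  have := log_lt_sub_one_of_pos (inv_pos.2 hs) (inv_ne_one.2 h1)
  rw [log_inv] at this
  unfold logAddInvSubOne; linarith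

lemma sub_mul_sub_one_div_le_logAddInvSubOne_sub (hs : 0 < s) (ht : 0 < t) :
    (t - s) * (s - 1) / (s * t) ≤ logAddInvSubOne t - logAddInvSubOne s := by
  have := one_sub_inv_le_log_of_pos (div_pos ht hs)
  rw [log_div ht.ne' hs.ne', inv_div] at this
  have h : (t - s) * (s - 1) / (s * t) = 1 - s / t + t⁻¹ - s⁻¹ := by field_simp; ring
  unfold logAddInvSubOne; linarith

lemma exists_pos_forall_logAddInvSubOne_lt_imp_abs_sub_one_le {ε : ℝ} (hε : 0 < ε) :
    ∃ η > 0, ∀ s, 0 < s → logAddInvSubOne s < η → |s - 1| ≤ ε := by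
  set δ := min ε (1 / 2)
  have hδ : 0 < δ := lt_min hε one_half_pos
  have hδε : δ ≤ ε := min_le_left _ _
  have hδ2 : δ ≤ 1 / 2 := min_le_right _ _
  refine ⟨min (logAddInvSubOne (1 - δ)) (logAddInvSubOne (1 + δ)),
    lt_min (logAddInvSubOne_pos (by linarith) (by linarith))
      (logAddInvSubOne_pos (by linarith) (by linarith)), fun s hs hsη => ?_⟩
  by_contra! hfar
  rcases lt_abs.1 hfar with h | h
  · have := sub_mul_sub_one_div_le_logAddInvSubOne_sub (s := 1 + δ) (by linarith) hs
    have : 0 ≤ (s - (1 + δ)) * (1 + δ - 1) / ((1 + δ) * s) :=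
      div_nonneg (mul_nonneg (by linarith) (by linarith)) (by positivity)
    linarith [min_le_right (logAddInvSubOne (1 - δ)) (logAddInvSubOne (1 + δ))]
  · have := sub_mul_sub_one_div_le_logAddInvSubOne_sub (s := 1 - δ) (by linarith) hs
    have : 0 ≤ (s - (1 - δ)) * (1 - δ - 1) / ((1 - δ) * s) :=
      div_nonneg (mul_nonneg_of_nonpos_of_nonpos (by linarith) (by linarith))
        (mul_pos (by linarith) hs).le
    linarith [min_le_left (logAddInvSubOne (1 - δ)) (logAddInvSubOne (1 + δ))]

lemma setIntegral_setOf_logAddInvSubOne_lt_pos {g : ℝ → ℝ} (hg : IntegrableOn g (Ioi 0))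
    (hg0 : ∀ s, 0 < s → 0 < g s) {η : ℝ} (hη : 0 < η) :
    0 < ∫ s in {s | logAddInvSubOne s < η}, g s ∂(volume.restrict (Ioi 0)) := by
  have hmeas : MeasurableSet {s | logAddInvSubOne s < η} :=
    measurableSet_lt measurable_logAddInvSubOne measurable_const
  rw [Measure.restrict_restrict hmeas, setIntegral_pos_iff_support_of_nonneg_ae
    ((ae_restrict_mem (hmeas.inter measurableSet_Ioi)).mono fun s hs => (hg0 s hs.2).le)
    (hg.mono_set inter_subset_right)]
  have hopen : IsOpen (Ioi 0 ∩ logAddInvSubOne ⁻¹' Iio η) :=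
    continuousOn_logAddInvSubOne.isOpen_inter_preimage isOpen_Ioi isOpen_Iio
  have hone : (1 : ℝ) ∈ Ioi 0 ∩ logAddInvSubOne ⁻¹' Iio η :=
    ⟨mem_Ioi.2 one_pos, by simpa [logAddInvSubOne] using hη⟩
  exact (hopen.measure_pos volume ⟨1, hone⟩).trans_le
    (measure_mono fun s hs => ⟨(hg0 s hs.1).ne', hs.2, hs.1⟩)

end logAddInvSubOne

lemma rpow_le_pow_add_inv_pow {s p : ℝ} {n : ℕ} (hs : 0 < s) (hp : |p| ≤ n) :
    s ^ p ≤ s ^ n + s⁻¹ ^ n := by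
  rcases le_total 1 s with h | h
  · calc s ^ p ≤ s ^ (n : ℝ) := rpow_le_rpow_of_exponent_le h ((le_abs_self p).trans hp)
      _ = s ^ n := rpow_natCast s n
      _ ≤ _ := le_add_of_nonneg_right (by positivity)
  · calc s ^ p ≤ s ^ (-(n : ℝ)) := rpow_le_rpow_of_exponent_ge hs h (neg_le_of_abs_le hp)
      _ = s⁻¹ ^ n := by rw [rpow_neg hs.le, rpow_natCast, inv_pow]
      _ ≤ _ := le_add_of_nonneg_left (by positivity)

lemma pow_mul_exp_neg_le_factorial {x : ℝ} (hx : 0 ≤ x) (n : ℕ) : x ^ n * exp (-x) ≤ n ! := by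
  have := pow_div_factorial_le_exp x hx n
  rw [div_le_iff₀ (by positivity)] at this
  rw [exp_neg, ← div_eq_mul_inv, div_le_iff₀ (exp_pos x)]
  linarith

lemma rpow_mul_exp_neg_add_div_le {s p b c : ℝ} {n : ℕ} (hb : 0 < b) (hc : 0 < c) (hs : 0 < s)
    (hp : |p| ≤ n) :
    s ^ p * exp (-(b * s + c / s)) ≤ n ! * ((2 / b) ^ n + c⁻¹ ^ n) * exp (-(b / 2) * s) := by
  have hb' : ((b / 2) * s) ^ n * exp (-((b / 2) * s)) ≤ n ! :=
    pow_mul_exp_neg_le_factorial (by positivity) n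
  have hc' : (c / s) ^ n * exp (-(c / s)) ≤ n ! := pow_mul_exp_neg_le_factorial (by positivity) n
  have hsplit :
      exp (-(b * s + c / s)) = exp (-(b / 2) * s) * exp (-(b / 2) * s) * exp (-(c / s)) := by
    rw [← exp_add, ← exp_add]; ring_nf
  have hbs : exp (-(b / 2) * s) ≤ 1 := exp_le_one_iff.2 (by nlinarith)
  have hcs : exp (-(c / s)) ≤ 1 := exp_le_one_iff.2 (by have := div_pos hc hs; linarith)
  calc s ^ p * exp (-(b * s + c / s)) ≤ (s ^ n + s⁻¹ ^ n) * exp (-(b * s + c / s)) :=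
        mul_le_mul_of_nonneg_right (rpow_le_pow_add_inv_pow hs hp) (exp_pos _).le
    _ = (2 / b) ^ n * (((b / 2) * s) ^ n * exp (-((b / 2) * s))) *
          (exp (-(b / 2) * s) * exp (-(c / s))) +
        c⁻¹ ^ n * ((c / s) ^ n * exp (-(c / s))) * (exp (-(b / 2) * s) * exp (-(b / 2) * s)) := by
        have e1 : s ^ n = (2 / b) ^ n * ((b / 2) * s) ^ n := by
          rw [← mul_pow]; congr 1; field_simp
        have e2 : s⁻¹ ^ n = c⁻¹ ^ n * (c / s) ^ n := by rw [← mul_pow]; congr 1; field_simp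
        rw [hsplit, e1, e2, neg_mul]; ring
    _ ≤ (2 / b) ^ n * n ! * (exp (-(b / 2) * s) * 1) +
        c⁻¹ ^ n * n ! * (exp (-(b / 2) * s) * 1) := by gcongr
    _ = _ := by ring

noncomputable def gigIntegral (p b c : ℝ) : ℝ := ∫ s in Ioi 0, s ^ p * exp (-(b * s + c / s))

lemma integrableOn_rpow_mul_exp_neg_add_div (p : ℝ) {b c : ℝ} (hb : 0 < b) (hc : 0 < c) :
    IntegrableOn (fun s => s ^ p * exp (-(b * s + c / s))) (Ioi 0) := by
  obtain ⟨n, hn⟩ := exists_nat_ge |p|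
  refine Integrable.mono' ((exp_neg_integrableOn_Ioi 0 (half_pos hb)).const_mul
    (n ! * ((2 / b) ^ n + c⁻¹ ^ n))) (by fun_prop) ?_
  filter_upwards [ae_restrict_mem measurableSet_Ioi] with s hs
  rw [norm_of_nonneg (by have : 0 < s := hs; positivity)]
  exact rpow_mul_exp_neg_add_div_le hb hc hs hn

lemma gigIntegral_eq_rpow_mul (p b c : ℝ) {θ : ℝ} (hθ : 0 < θ) :
    gigIntegral p b c = θ ^ (p + 1) * gigIntegral p (b * θ) (c / θ) := by
  have h : gigIntegral p b c =
      θ * ∫ s in Ioi 0, (θ * s) ^ p * exp (-(b * (θ * s) + c / (θ * s))) := by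
    rw [integral_comp_mul_left_Ioi (fun s => s ^ p * exp (-(b * s + c / s))) 0 hθ, mul_zero,
      smul_eq_mul, mul_inv_cancel_left₀ hθ.ne', gigIntegral]
  rw [h, gigIntegral, rpow_add_one hθ.ne', mul_comm (θ ^ p), mul_assoc]
  congr 1
  rw [← integral_const_mul]
  refine setIntegral_congr_fun measurableSet_Ioi fun s hs => ?_
  rw [mul_rpow hθ.le (le_of_lt (mem_Ioi.1 hs))]
  field_simp

lemma besselK_eq_gigIntegral (ν z : ℝ) :
    besselK ν z = 1 / 2 * gigIntegral (ν - 1) (z / 2) (z / 2) := by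
  unfold besselK gigIntegral
  congr 2 with u
  ring_nf

lemma besselK_two_mul_sqrt (ν : ℝ) {b c : ℝ} (hb : 0 < b) (hc : 0 < c) :
    besselK ν (2 * √(b * c)) = 1 / 2 * √(b / c) ^ ν * gigIntegral (ν - 1) b c := by
  have hb' : 2 * √(b * c) / 2 * √(b / c) = b := by
    rw [mul_div_cancel_left₀ _ two_ne_zero, ← sqrt_mul (by positivity),
      show b * c * (b / c) = b * b by field_simp, sqrt_mul_self hb.le]
  have hc' : 2 * √(b * c) / 2 / √(b / c) = c := by
    rw [mul_div_cancel_left₀ _ two_ne_zero, ← sqrt_div (by positivity),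
      show b * c / (b / c) = c * c by field_simp, sqrt_mul_self hc.le]
  rw [besselK_eq_gigIntegral, gigIntegral_eq_rpow_mul _ _ _ (sqrt_pos.2 (div_pos hb hc)), hb', hc',
    sub_add_cancel, mul_assoc]

lemma sqrt_div_mul_besselR (ν : ℝ) {b c : ℝ} (hb : 0 < b) (hc : 0 < c) :
    √(c / b) * besselR ν (2 * √(b * c)) = gigIntegral ν b c / gigIntegral (ν - 1) b c := by
  have hx : 0 < √(b / c) := sqrt_pos.2 (div_pos hb hc)
  have hinv : √(c / b) * √(b / c) = 1 := by
    rw [← sqrt_mul (by positivity), show c / b * (b / c) = 1 by field_simp, sqrt_one]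
  rw [besselR, besselK_two_mul_sqrt _ hb hc, besselK_two_mul_sqrt _ hb hc, add_sub_cancel_right,
    rpow_add_one hx.ne']
  calc _ = (√(c / b) * √(b / c)) * (√(b / c) ^ ν * gigIntegral ν b c) /
        (√(b / c) ^ ν * gigIntegral (ν - 1) b c) := by ring
    _ = _ := by rw [hinv, one_mul, mul_div_mul_left _ _ (rpow_pos_of_pos hx ν).ne']

lemma gigIntegral_div_gigIntegral_eq_mul (ν b c : ℝ) {θ : ℝ} (hθ : 0 < θ) :
    gigIntegral ν b c / gigIntegral (ν - 1) b c =
      θ * (gigIntegral ν (b * θ) (c / θ) / gigIntegral (ν - 1) (b * θ) (c / θ)) := by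
  rw [gigIntegral_eq_rpow_mul ν b c hθ, gigIntegral_eq_rpow_mul (ν - 1) b c hθ, sub_add_cancel,
    rpow_add_one hθ.ne', mul_comm (θ ^ ν) θ, mul_assoc, mul_div_assoc,
    mul_div_mul_left _ _ (rpow_pos_of_pos hθ ν).ne']

lemma gigIntegral_sub_add (p b c t : ℝ) :
    gigIntegral (p - t) b (c + t) = exp (-t) *
      ∫ s in Ioi 0, exp (-(t * logAddInvSubOne s)) * (s ^ p * exp (-(b * s + c / s))) := by
  rw [gigIntegral, ← integral_const_mul]
  refine setIntegral_congr_fun measurableSet_Ioi fun s (hs : 0 < s) => ?_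
  have h : exp (-(b * s + (c + t) / s)) =
      exp (-t) * exp (-(t * logAddInvSubOne s)) * exp (log s * t) * exp (-(b * s + c / s)) := by
    rw [← exp_add, ← exp_add, ← exp_add]
    congr 1
    unfold logAddInvSubOne
    field_simp
    ring
  rw [rpow_sub hs, rpow_def_of_pos hs t, h]
  field_simp

theorem tendsto_gigIntegral_div_gigIntegral (p : ℝ) {b c : ℝ} (hb : 0 < b) (hc : 0 < c) :
    Tendsto (fun t => gigIntegral (p + 1 - t) b (c + t) / gigIntegral (p - t) b (c + t))
      atTop (𝓝 1) := by
  set g := fun s : ℝ => s ^ p * exp (-(b * s + c / s))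
  have hg : IntegrableOn g (Ioi 0) := integrableOn_rpow_mul_exp_neg_add_div p hb hc
  have hg0 : ∀ s, 0 < s → 0 < g s := fun s hs => by positivity
  have hsg : ∀ s, 0 < s → (s ^ (p + 1) * exp (-(b * s + c / s))) = id s * g s := fun s hs => by
    rw [rpow_add_one hs.ne']; simp only [g, id]; ring
  have hpos : ∀ᵐ s : ℝ ∂(volume.restrict (Ioi 0)), 0 < s := ae_restrict_mem measurableSet_Ioi
  refine (tendsto_integral_mul_exp_neg_mul_div hg measurable_logAddInvSubOne
    (hpos.mono fun s hs => (hg0 s hs).le) (hpos.mono fun s hs => logAddInvSubOne_nonneg hs)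
    ((integrableOn_rpow_mul_exp_neg_add_div (p + 1) hb hc).congr_fun
      (fun s hs => hsg s hs) measurableSet_Ioi) (fun ε hε => ?_)
    (fun η hη => setIntegral_setOf_logAddInvSubOne_lt_pos hg hg0 hη)).congr fun t => ?_
  · obtain ⟨η, hη, h⟩ := exists_pos_forall_logAddInvSubOne_lt_imp_abs_sub_one_le hε
    exact ⟨η, hη, hpos.mono fun s hs => h s hs⟩
  · rw [gigIntegral_sub_add, gigIntegral_sub_add, mul_div_mul_left _ _ (exp_pos _).ne']
    congr 1
    refine setIntegral_congr_fun measurableSet_Ioi fun s (hs : 0 < s) => ?_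
    rw [hsg s hs]; ring

theorem pareto_posterior_mean_tendsto_of_precise_experts_general
    (α₀ ω θbar : ℝ) (hω : 0 < ω) (hθbar : 0 < θbar)
    (K M : ℕ) (hM : 1 ≤ M) :
    Tendsto (fun ξ : ℝ =>
        Real.sqrt (ξ * M * θbar / ω) *
          besselR (α₀ - M * ξ + K) (2 * Real.sqrt (ω * (ξ * M * θbar))))
      atTop (nhds θbar) := by
  have hM0 : (0 : ℝ) < M := Nat.cast_pos.2 hM
  have hMξ : Tendsto (fun ξ : ℝ => M * ξ - 1) atTop atTop :=
    tendsto_atTop_add_const_right _ _ (tendsto_id.const_mul_atTop hM0)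
  have hlim := ((tendsto_gigIntegral_div_gigIntegral (α₀ + K - 2) (mul_pos hω hθbar)
    one_pos).comp hMξ).const_mul θbar
  rw [mul_one] at hlim
  refine hlim.congr' ?_
  filter_upwards [eventually_gt_atTop 0] with ξ hξ
  rw [sqrt_div_mul_besselR _ hω (by positivity), gigIntegral_div_gigIntegral_eq_mul _ _ _ hθbar,
    mul_div_cancel_right₀ _ hθbar.ne']
  simp only [Function.comp_apply]
  ring_nf

/-- **Theorem 4b: vanishing coefficient of variation of the experts.**
As `ξ → ∞` (i.e. the coefficient of variation `1/√ξ` of the expert opinions tends to 0),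
the posterior mean of the Pareto tail index converges to the experts' opinion `θ̄`. -/
theorem pareto_posterior_mean_tendsto_of_precise_experts
    (α₀ ω θbar : ℝ) (hα₀ : 0 < α₀) (hω : 0 < ω) (hθbar : 0 < θbar)
    (K M : ℕ) (hM : 1 ≤ M) :
    Tendsto (fun ξ : ℝ =>
        Real.sqrt (ξ * M * θbar / ω) *
          besselR (α₀ - M * ξ + K) (2 * Real.sqrt (ω * (ξ * M * θbar))))
      atTop (nhds θbar) :=
  pareto_posterior_mean_tendsto_of_precise_experts_general α₀ ω θbar hω hθbar K M hM
end
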